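/- arXiv:2508.03150 — 2 statements merged into one kernel-verified Lean document; each statement's English description precedes it below -/
import Mathlib

section
/- Tableau specialization (Lemma 2.6, identity (2.15)): Let R be a commutative ring, M, N positive integers, r, m integers, and w : {1,…,M} × ℤ → R. Define N×N matrices U_k := (E + w_{k,1−r}E_{1,2})(E + w_{k,2−r}E_{2,3})⋯(E + w_{k,N−1−r}E_{N−1,N}) for 1 ≤ k ≤ M, where E is the identity matrix and E_{t,t+1} the matrix unit, and put U := U_1 U_2 ⋯ U_M (a product in this order; U is upper unitriangular). Let λ ⊇ μ be partitions with ℓ(λ) ≤ r+m ≤ N and λ_1 ≤ N−(r+m). Then S^{(r+m)}_{λ/μ}(U) = Σ_{T ∈ SSYT_M(λ/μ)} ∏_{(i,j) ∈ D(λ/μ)} w_{T(i,j), m+j−i}. -/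
open Matrix BigOperators Finset Filter

/-- Extend a `Fin N`-indexed matrix to `ℕ` indices by zero. -/
def matExt {R : Type*} [Zero R] {N : ℕ} (U : Matrix (Fin N) (Fin N) R) : ℕ → ℕ → R :=
  fun i j => if hi : i < N then (if hj : j < N then U ⟨i, hi⟩ ⟨j, hj⟩ else 0) else 0

/-- `U` is upper unitriangular. -/
def UpperUni {R : Type*} [Zero R] [One R] {N : ℕ} (U : Matrix (Fin N) (Fin N) R) : Prop :=
  (∀ i, U i i = 1) ∧ ∀ i j : Fin N, (j : ℕ) < (i : ℕ) → U i j = 0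

/-- `L` is lower unitriangular. -/
def LowerUni {R : Type*} [Zero R] [One R] {N : ℕ} (L : Matrix (Fin N) (Fin N) R) : Prop :=
  (∀ i, L i i = 1) ∧ ∀ i j : Fin N, (i : ℕ) < (j : ℕ) → L i j = 0

/-- 0-based entries of the Maya diagram `J(λ;r)` (the `a`-th smallest element, minus 1):
for `a = 0,…,r-1` this is `λ_{r-a} + a` (with `λ` 0-based). -/
def maya (lam : ℕ → ℕ) (r : ℕ) (a : Fin r) : ℕ := lam (r - 1 - (a : ℕ)) + (a : ℕ)

/-- The ninth variation of the skew Schur function `S^{(r)}_{λ/μ}(U)`: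
the minor of `U` on rows `J(μ;r)` and columns `J(λ;r)`. -/
def SchurV {R : Type*} [CommRing R] {N : ℕ} (U : Matrix (Fin N) (Fin N) R)
    (r : ℕ) (lam mu : ℕ → ℕ) : R :=
  Matrix.det (Matrix.of fun i j : Fin r => matExt U (maya mu r i) (maya lam r j))

/-- Conjugate partition (0-based), counting parts among indices `< B`. -/
def conjF (f : ℕ → ℕ) (B : ℕ) : ℕ → ℕ :=
  fun i => ((Finset.range B).filter fun j => i + 1 ≤ f j).card

/-- The hook partition `(a+1, 1^b)` (0-based function). -/
def hookP (a b : ℕ) : ℕ → ℕ := fun k => if k = 0 then a + 1 else if k ≤ b then 1 else 0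

/-- `h^{(r)}_d(U) = S^{(r)}_{(d)}(U)`, zero for `d < 0`. -/
def hSV {R : Type*} [CommRing R] {N : ℕ} (U : Matrix (Fin N) (Fin N) R) (r : ℕ) (d : ℤ) : R :=
  if 0 ≤ d then SchurV U r (fun k => if k = 0 then d.toNat else 0) (fun _ => 0) else 0

/-- `e^{(r)}_d(U) = S^{(r)}_{(1^d)}(U)`, zero for `d < 0`. -/
def eSV {R : Type*} [CommRing R] {N : ℕ} (U : Matrix (Fin N) (Fin N) R) (r : ℕ) (d : ℤ) : R :=
  if 0 ≤ d then SchurV U r (fun k => if k < d.toNat then 1 else 0) (fun _ => 0) else 0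

/-- The partition with Frobenius coordinates `(a|b)` (all 0-based as functions). -/
def frobP (p : ℕ) (a b : Fin p → ℕ) : ℕ → ℕ :=
  fun i => if h : i < p then a ⟨i, h⟩ + i + 1
    else (Finset.univ.filter fun j : Fin p => i < b j + (j : ℕ) + 1).card

/-- `f : ℕ → ℤ` is a partition of length `≤ B`. -/
def IsPartZ (B : ℕ) (f : ℕ → ℤ) : Prop :=
  (∀ i, f (i + 1) ≤ f i) ∧ (∀ i, 0 ≤ f i) ∧ (∀ i, B ≤ i → f i = 0)

/-- `lam/mu` is a skew partition (of length `≤ B`). -/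
def IsSkewZ (B : ℕ) (lam mu : ℕ → ℤ) : Prop :=
  IsPartZ B lam ∧ IsPartZ B mu ∧ ∀ i, mu i ≤ lam i

open Classical in
/-- `S^{(r)}_{λ/μ}(U)` with the convention that it is `0` if `λ/μ` is not a skew partition. -/
noncomputable def SchurVz {R : Type*} [CommRing R] {N : ℕ} (U : Matrix (Fin N) (Fin N) R)
    (r B : ℕ) (lam mu : ℕ → ℤ) : R :=
  if IsSkewZ B lam mu then SchurV U r (fun i => (lam i).toNat) (fun i => (mu i).toNat) else 0

open Classical in
/-- `S^{(r)}_{λ'/μ'}(U)` applied to the conjugates, with the zero convention. -/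
noncomputable def SchurVzConj {R : Type*} [CommRing R] {N : ℕ} (U : Matrix (Fin N) (Fin N) R)
    (r B : ℕ) (lam mu : ℕ → ℤ) : R :=
  if IsSkewZ B lam mu then
    SchurV U r (conjF (fun i => (lam i).toNat) B) (conjF (fun i => (mu i).toNat) B) else 0

/-- `lam/mu` is a skew partition (ℕ-valued version). -/
def IsSkewN (B : ℕ) (lam mu : ℕ → ℕ) : Prop :=
  (∀ i, lam (i + 1) ≤ lam i) ∧ (∀ i, mu (i + 1) ≤ mu i) ∧ (∀ i, mu i ≤ lam i) ∧
    (∀ i, B ≤ i → lam i = 0)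

open Classical in
noncomputable def SchurVn {R : Type*} [CommRing R] {N : ℕ} (U : Matrix (Fin N) (Fin N) R)
    (r B : ℕ) (lam mu : ℕ → ℕ) : R :=
  if IsSkewN B lam mu then SchurV U r lam mu else 0

/-- The rectangular partition `[m|n] = (n^m)`. -/
def rectP (m n : ℕ) : ℕ → ℕ := fun i => if i < m then n else 0

/-- `[m|n]^l = ((n+1)^l, n^{m-l})`. -/
def rectUpP (m n l : ℕ) : ℕ → ℕ := fun i => if i < l then n + 1 else if i < m then n else 0

/-- `[m|n]_k = (n^m, k)`. -/
def rectLowP (m n k : ℕ) : ℕ → ℕ := fun i => if i < m then n else if i = m then k else 0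

/-- `E + c·E_{t,t+1}` (indices 0-based). -/
def elemMat {R : Type*} [CommRing R] (N t : ℕ) (c : R) : Matrix (Fin N) (Fin N) R :=
  1 + Matrix.of (fun i j : Fin N => if (i : ℕ) = t ∧ (j : ℕ) = t + 1 then c else 0)

/-- `U = U_1 ⋯ U_M` with `U_k = (E + w_{k,1-r}E_{1,2}) ⋯ (E + w_{k,N-1-r}E_{N-1,N})`. -/
def UmatW {R : Type*} [CommRing R] (N M : ℕ) (r : ℤ) (w : ℕ → ℤ → R) :
    Matrix (Fin N) (Fin N) R :=
  ((List.range M).map fun k =>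
    ((List.range (N - 1)).map fun t => elemMat N t (w (k + 1) ((t : ℤ) + 1 - r))).prod).prod

/-- The partition `(m_1^{r_1} m_2^{r_2-r_1} ⋯ m_n^{r_n-r_{n-1}})` (corner data 0-based). -/
def stepPart (n : ℕ) (m rr : ℕ → ℕ) : ℕ → ℕ :=
  fun i =>
    if h : (((Finset.range n).filter fun j => i < rr j)).Nonempty then
      m (((Finset.range n).filter fun j => i < rr j).min' h)
    else 0

/-- `Add_{a,b}` (rows 1-based in `a`, `b`; the function argument is 0-based). -/
def AddOp (a b : ℕ) (k : ℕ → ℕ) : ℕ → ℕ := fun i =>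
  if i + 1 ≤ a then k i
  else if i + 1 = a + 1 then k (a - 1)
  else if i + 1 ≤ b + 1 then k (i - 1) + 1
  else k i

/-- `Rem_{a,b}`. -/
def RemOp (a b : ℕ) (k : ℕ → ℕ) : ℕ → ℕ := fun i =>
  if i + 1 < a then k i
  else if i + 1 ≤ b - 1 then k (i + 1) - 1
  else if i + 1 = b then k b
  else k i

/-- `op_{a 0, b 0} ∘ op_{a 1, b 1} ∘ ⋯ ∘ op_{a (t-1), b (t-1)}` applied to `k`. -/
def iterOp (op : ℕ → ℕ → (ℕ → ℕ) → ℕ → ℕ) (t : ℕ) (a b : ℕ → ℕ) (k : ℕ → ℕ) : ℕ → ℕ :=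
  (List.range t).foldr (fun i acc => op (a i) (b i) acc) k

/-- the `i`-th smallest element of a finite set of naturals (0-based). -/
def ascNth (s : Finset ℕ) (i : ℕ) : ℕ := (s.sort (· ≤ ·)).getD i 0

/-- The cells of the skew Young diagram `D(λ/μ)` (0-based, rows `< B`). -/
def cellsD (B : ℕ) (lam mu : ℕ → ℕ) : Finset (ℕ × ℕ) :=
  (Finset.range B ×ˢ Finset.range (lam 0 + 1)).filter fun p => mu p.1 ≤ p.2 ∧ p.2 < lam p.1

/-- Semistandardness: weakly increasing along rows, strictly increasing down columns. -/
def IsSSYT {M B : ℕ} {lam mu : ℕ → ℕ} (T : ↥(cellsD B lam mu) → Fin M) : Prop :=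
  (∀ c c' : ↥(cellsD B lam mu), c.val.1 = c'.val.1 → c.val.2 ≤ c'.val.2 → T c ≤ T c') ∧
  (∀ c c' : ↥(cellsD B lam mu), c.val.1 < c'.val.1 → c.val.2 = c'.val.2 → T c < T c')

open Classical in
/-- Sum over all semistandard tableaux of shape `λ/μ` with entries in `{1,…,M}` of
the product over cells `c` of `f (entry) c`. -/
noncomputable def tabSum {R : Type*} [CommRing R] (M B : ℕ) (lam mu : ℕ → ℕ)
    (f : ℕ → ℕ × ℕ → R) : R :=
  ∑ T ∈ Finset.univ.filter (fun T : ↥(cellsD B lam mu) → Fin M => IsSSYT T),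
    ∏ c : ↥(cellsD B lam mu), f ((T c : ℕ) + 1) c.val

/-- `M`-truncated Schur multiple zeta value for a general filling `s` of the diagram. -/
noncomputable def zetaTF (M B : ℕ) (lam mu : ℕ → ℕ) (s : ℕ × ℕ → ℂ) : ℂ :=
  tabSum M B lam mu fun k c => (k : ℂ) ^ (-(s c))

/-- `M`-truncated diagonally constant Schur multiple zeta value `ζ^M_{λ/μ}(a)`. -/
noncomputable def zetaT (M B : ℕ) (lam mu : ℕ → ℕ) (a : ℤ → ℂ) : ℂ :=
  zetaTF M B lam mu fun c => a ((c.2 : ℤ) - (c.1 : ℤ))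

open Classical in
/-- `ζ^M_{λ/μ}(a)` with the zero convention for non-skew shapes. -/
noncomputable def zetaZ (M B : ℕ) (lam mu : ℕ → ℤ) (a : ℤ → ℂ) : ℂ :=
  if IsSkewZ B lam mu then
    zetaT M B (fun i => (lam i).toNat) (fun i => (mu i).toNat) a else 0

open Classical in
/-- `ζ^M_{λ'/μ'}(a)` applied to conjugates, with the zero convention. -/
noncomputable def zetaZConj (M B : ℕ) (lam mu : ℕ → ℤ) (a : ℤ → ℂ) : ℂ :=
  if IsSkewZ B lam mu then
    zetaT M (lam 0).toNat (conjF (fun i => (lam i).toNat) B)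
      (conjF (fun i => (mu i).toNat) B) a
  else 0

open Classical in
/-- `M`-truncated multiple zeta-star value `ζ^{⋆,M}(s_0,…,s_{d-1})`. -/
noncomputable def zetaStarT (M d : ℕ) (s : ℕ → ℂ) : ℂ :=
  ∑ f ∈ Finset.univ.filter (fun f : Fin d → Fin M => ∀ i j : Fin d, i ≤ j → f i ≤ f j),
    ∏ i : Fin d, (((f i : ℕ) + 1 : ℕ) : ℂ) ^ (-(s i))

open Classical in
/-- `M`-truncated multiple zeta value `ζ^{M}(s_0,…,s_{d-1})`. -/
noncomputable def zetaMT (M d : ℕ) (s : ℕ → ℂ) : ℂ :=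
  ∑ f ∈ Finset.univ.filter (fun f : Fin d → Fin M => ∀ i j : Fin d, i < j → f i < f j),
    ∏ i : Fin d, (((f i : ℕ) + 1 : ℕ) : ℂ) ^ (-(s i))

/-- The Riemann zeta value `ζ(k) = Σ_{n ≥ 1} n^{-k}`. -/
noncomputable def zetaVal (k : ℕ) : ℂ := ∑' n : ℕ, ((n + 1 : ℕ) : ℂ) ^ (-(k : ℤ))

/-- `ζ^⋆(1,k) = Σ_{1 ≤ m ≤ n} m^{-1} n^{-k}`. -/
noncomputable def zetaStarOne (k : ℕ) : ℂ :=
  ∑' n : ℕ, (∑ m ∈ Finset.Icc 1 (n + 1), ((m : ℂ))⁻¹) * ((n + 1 : ℕ) : ℂ) ^ (-(k : ℤ))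
/-!
The factor `U_k` is the transfer matrix of one-row paths: its `(i, j)` entry is the product of
the weights `w_{k, t - r}` over the steps `i ≤ t < j`. By Cauchy–Binet,
`S_{λ/μ}(U V) = Σ_ν S_{ν/μ}(U) S_{λ/ν}(V)`, and a minor of a single path matrix vanishes
unless the two Maya diagrams interlace, that is, unless `λ/ν` is a horizontal strip; it is then
the product of the weights of the cells of `λ/ν`. Splitting off the last factor therefore matches
the decomposition of a semistandard tableau with entries `≤ M + 1` into the horizontal strip of
its entries `M + 1` and a tableau of shape `ν/μ` with entries `≤ M`, and induction on `M`
concludes.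
-/

namespace Matrix

variable {R : Type*} [CommRing R] {q : ℕ}

theorem det_eq_zero_of_zero_block (A : Matrix (Fin q) (Fin q) R) (S T : Finset (Fin q))
    (hcard : q < #S + #T) (h : ∀ a ∈ S, ∀ b ∈ T, A a b = 0) : A.det = 0 := by
  rw [det_apply']
  refine sum_eq_zero fun σ _ => ?_
  obtain ⟨a, ha⟩ := inter_nonempty_of_card_lt_card_add_card (subset_univ S)
    (subset_univ (T.map σ.toEmbedding)) (by simpa using hcard)
  rw [mem_inter, mem_map_equiv] at ha
  obtain ⟨haS, haT⟩ := ha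
  rw [prod_eq_zero (mem_univ (σ.symm a)) (by simpa using h a haS _ haT), mul_zero]

/-- The rows `≥ a` are supported on the columns `> a`. -/
theorem det_minor_eq_zero_of_lt {F : ℕ → ℕ → R} (hF : ∀ i j, j < i → F i j = 0)
    {ρ κ : Fin q → ℕ} (hρ : Monotone ρ) (hκ : Monotone κ) {a : Fin q} (ha : κ a < ρ a) :
    (of fun x y => F (ρ x) (κ y)).det = 0 :=
  det_eq_zero_of_zero_block _ (Ici a) (Iic a) (by rw [Fin.card_Ici, Fin.card_Iic]; omega)
    fun _ hx _ hy => hF _ _ <|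
      (hκ (mem_Iic.mp hy)).trans_lt <| ha.trans_le (hρ (mem_Ici.mp hx))

end Matrix

section CauchyBinet

variable {α β : Type*} [LinearOrder α] [AddCommMonoid β] {q : ℕ}

theorem Finset.sum_filter_injective_eq_sum_strictMono_perm (s : Finset α)
    (F : (Fin q → α) → β) :
    ∑ f ∈ (Fintype.piFinset fun _ => s).filter Function.Injective, F f =
      ∑ g ∈ (Fintype.piFinset fun _ => s).filter StrictMono,
        ∑ σ : Equiv.Perm (Fin q), F (g ∘ σ) := by
  rw [← sum_product']
  refine (sum_nbij' (fun p : (Fin q → α) × Equiv.Perm (Fin q) => p.1 ∘ p.2)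
    (fun f => (f ∘ Tuple.sort f, (Tuple.sort f)⁻¹))
    ?_ ?_ ?_ ?_ fun _ _ => rfl).symm
  · rintro ⟨g, σ⟩ h
    simp only [mem_product, mem_filter, Fintype.mem_piFinset] at h ⊢
    exact ⟨fun a => h.1.1 (σ a), h.1.2.injective.comp σ.injective⟩
  · intro f h
    simp only [mem_filter, Fintype.mem_piFinset, mem_product, mem_univ, and_true] at h ⊢
    exact ⟨fun a => h.1 _, (Tuple.monotone_sort f).strictMono_of_injective
      (h.2.comp (Tuple.sort f).injective)⟩
  · rintro ⟨g, σ⟩ h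
    simp only [mem_product, mem_filter] at h
    have hsorted : (g ∘ σ) ∘ Tuple.sort (g ∘ σ) = g := by
      rw [Tuple.comp_perm_comp_sort_eq_comp_sort,
        Tuple.sort_eq_refl_iff_monotone.mpr h.1.2.monotone]
      rfl
    have hinv : σ * Tuple.sort (g ∘ σ) = 1 :=
      Equiv.ext fun a => h.1.2.injective (congrFun hsorted a)
    rw [hsorted, inv_eq_of_mul_eq_one_left hinv]
  · intro f _
    ext a
    simp

theorem Matrix.det_sum_mul_eq_sum_strictMono {R : Type*} [CommRing R] (s : Finset α)
    (A : Fin q → α → R) (B : α → Fin q → R) :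
    (of fun a b => ∑ k ∈ s, A a k * B k b).det =
      ∑ g ∈ (Fintype.piFinset fun _ => s).filter StrictMono,
        (of fun a b => A a (g b)).det * (of fun a b => B (g a) b).det := by
  have hexpand : (of fun a b => ∑ k ∈ s, A a k * B k b).det =
      ∑ f ∈ Fintype.piFinset fun _ => s,
        (∏ b, B (f b) b) * (of fun a b => A a (f b)).det := by
    simp only [det_apply', of_apply, prod_univ_sum, mul_sum]
    rw [sum_comm]
    refine sum_congr rfl fun f _ => sum_congr rfl fun σ _ => ?_
    rw [prod_mul_distrib]
    ring
  have hnoninj : ∀ f : Fin q → α, ¬ f.Injective → (of fun a b => A a (f b)).det = 0 := by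
    intro f hf
    obtain ⟨a, b, hab, hne⟩ := Function.not_injective_iff.mp hf
    exact det_zero_of_column_eq hne fun k => by simp [hab]
  rw [hexpand, ← sum_filter_of_ne fun f _ hne => by_contra fun hf =>
    hne (by rw [hnoninj f hf, mul_zero]), sum_filter_injective_eq_sum_strictMono_perm]
  refine sum_congr rfl fun g _ => ?_
  rw [det_apply' (of fun a b => B (g a) b), mul_sum]
  refine sum_congr rfl fun σ _ => ?_
  have hperm : (of fun a b => A a ((g ∘ σ) b)).det =
      Equiv.Perm.sign σ * (of fun a b => A a (g b)).det :=
    det_permute' σ (of fun a b => A a (g b))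
  simp only [Function.comp_apply, of_apply] at hperm ⊢
  rw [hperm]
  ring

end CauchyBinet

section PathWeight

variable {R : Type*} [CommMonoidWithZero R]

def pathWeight (c : ℕ → R) (i j : ℕ) : R := if i ≤ j then ∏ t ∈ Ico i j, c t else 0

variable {c : ℕ → R} {i j k : ℕ}

theorem pathWeight_of_lt (h : j < i) : pathWeight c i j = 0 := if_neg (by omega)

@[simp] theorem pathWeight_self : pathWeight c i i = 1 := by simp [pathWeight]

theorem pathWeight_succ_right (h : i ≤ j) : pathWeight c i (j + 1) = pathWeight c i j * c j := by
  rw [pathWeight, pathWeight, if_pos h, if_pos (by omega), prod_Ico_succ_top h]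

theorem pathWeight_eq_mul (hij : i ≤ j) (hk : j ≤ k ∨ k < i) :
    pathWeight c i k = pathWeight c i j * pathWeight c j k := by
  rcases hk with hjk | hki
  · rw [pathWeight, pathWeight, pathWeight, if_pos (hij.trans hjk), if_pos hij, if_pos hjk,
      prod_Ico_consecutive c hij hjk]
  · rw [pathWeight_of_lt hki, pathWeight_of_lt (hki.trans_le hij), mul_zero]

theorem pathWeight_zero : pathWeight (0 : ℕ → R) i j = if i = j then 1 else 0 := by
  rcases lt_trichotomy i j with h | rfl | h
  · rw [pathWeight, if_pos h.le, if_neg h.ne, prod_eq_zero (left_mem_Ico.mpr h) rfl]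
  · simp
  · rw [pathWeight_of_lt h, if_neg h.ne']

end PathWeight

section PathMatrix

variable {R : Type*} [CommRing R] {i j : ℕ}

def pathMatrix (N : ℕ) (c : ℕ → R) : Matrix (Fin N) (Fin N) R :=
  of fun i j => pathWeight c i j

theorem pathMatrix_isUpperTriangular (N : ℕ) (c : ℕ → R) :
    (pathMatrix N c).IsUpperTriangular :=
  fun _ _ h => pathWeight_of_lt h

theorem pathMatrix_zero (N : ℕ) : pathMatrix N (0 : ℕ → R) = 1 := by
  ext i j
  simp [pathMatrix, pathWeight_zero, one_apply, Fin.val_inj]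

theorem elemMat_prod_apply (N s : ℕ) (c : ℕ → R) (i j : Fin N) :
    ((List.range s).map fun t => elemMat N t (c t)).prod i j =
      if (j : ℕ) ≤ max s i then pathWeight c i j else 0 := by
  induction s generalizing j with
  | zero =>
    rw [List.range_zero, List.map_nil, List.prod_nil, one_apply]
    rcases lt_trichotomy (i : ℕ) j with h | h | h
    · rw [if_neg (by omega), if_neg (by omega)]
    · rw [if_pos (Fin.ext h), if_pos (by omega), h, pathWeight_self]
    · rw [if_neg (by omega), if_pos (by omega), pathWeight_of_lt h]
  | succ s ih =>
    rw [List.range_succ, List.map_append, List.prod_append, List.map_singleton,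
      List.prod_singleton, elemMat, mul_add, mul_one, Matrix.add_apply, ih, mul_apply]
    by_cases hj : (j : ℕ) = s + 1
    · have hs : s < N := by omega
      rw [Fintype.sum_eq_single ⟨s, hs⟩ fun k hk => by
        rw [of_apply, if_neg fun h => hk (Fin.ext h.1), mul_zero], ih, of_apply]
      simp only [hj, true_and, le_max_left, if_true]
      rcases lt_trichotomy (i : ℕ) (s + 1) with h | h | h
      · rw [if_neg (by omega), zero_add, pathWeight_succ_right (by omega)]
      · rw [if_pos (by omega), h, pathWeight_self, pathWeight_of_lt (by omega), zero_mul,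
          add_zero]
      · rw [if_pos (by omega), pathWeight_of_lt h, pathWeight_of_lt (by omega), zero_mul,
          add_zero]
    · rw [sum_eq_zero fun k _ => by rw [of_apply, if_neg fun h => hj h.2, mul_zero], add_zero]
      simp only [show (j : ℕ) ≤ max s i ↔ (j : ℕ) ≤ max (s + 1) i by omega]

theorem elemMat_prod_eq_pathMatrix (N : ℕ) (c : ℕ → R) :
    ((List.range (N - 1)).map fun t => elemMat N t (c t)).prod = pathMatrix N c := by
  ext i j
  rw [elemMat_prod_apply, if_pos (by omega), pathMatrix, of_apply]

theorem matExt_mul {N : ℕ} (U V : Matrix (Fin N) (Fin N) R) (i j : ℕ) :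
    matExt (U * V) i j = ∑ k ∈ range N, matExt U i k * matExt V k j := by
  rw [← Fin.sum_univ_eq_sum_range]
  unfold matExt
  by_cases hi : i < N
  · by_cases hj : j < N
    · simp [hi, hj, mul_apply]
    · simp [hi, hj]
  · simp [hi]

theorem matExt_pathMatrix {N : ℕ} (c : ℕ → R) (hi : i < N) (hj : j < N) :
    matExt (pathMatrix N c) i j = pathWeight c i j := by
  rw [matExt, dif_pos hi, dif_pos hj, pathMatrix, of_apply]

theorem matExt_eq_zero_of_lt {N : ℕ} {U : Matrix (Fin N) (Fin N) R} (hU : U.IsUpperTriangular)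
    (h : j < i) : matExt U i j = 0 := by
  unfold matExt
  split_ifs with hi hj
  · exact hU (show (⟨j, hj⟩ : Fin N) < ⟨i, hi⟩ from h)
  all_goals rfl

end PathMatrix

section PathMinor

variable {R : Type*} [CommRing R] {q : ℕ}

def Interlaces (ρ κ : Fin q → ℕ) : Prop :=
  (∀ a, ρ a ≤ κ a) ∧ ∀ a b, a < b → κ a < ρ b

theorem det_pathWeight_minor_of_interlaces (c : ℕ → R) {ρ κ : Fin q → ℕ}
    (h : Interlaces ρ κ) :
    (of fun a b => pathWeight c (ρ a) (κ b)).det = ∏ a, pathWeight c (ρ a) (κ a) :=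
  det_of_isUpperTriangular fun _ _ hba => pathWeight_of_lt (h.2 _ _ hba)

/-- For the least such `a`, row `a` is `pathWeight c (ρ a) (ρ b)` times row `b`: every path
from `ρ a` to a column `κ j` with `j ≥ a` passes through `ρ b`. -/
theorem det_pathWeight_minor_eq_zero (c : ℕ → R) {ρ κ : Fin q → ℕ} (hρ : Monotone ρ)
    (hκ : Monotone κ) (h : ∃ a b, a < b ∧ ρ b ≤ κ a) :
    (of fun a b => pathWeight c (ρ a) (κ b)).det = 0 := by
  obtain ⟨a, ⟨b, hab, hba⟩, hmin⟩ :=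
    wellFounded_lt.has_min {a | ∃ b, a < b ∧ ρ b ≤ κ a} h
  have hrow : ∀ j, pathWeight c (ρ a) (κ j) =
      pathWeight c (ρ a) (ρ b) * pathWeight c (ρ b) (κ j) :=
    fun j => pathWeight_eq_mul (hρ hab.le) <| by
      rcases lt_or_ge j a with hj | hj
      · exact .inr (not_le.mp fun hle => hmin j ⟨a, hj, hle⟩ hj)
      · exact .inl (hba.trans (hκ hj))
  rw [← det_updateRow_add_smul_self _ hab.ne (-pathWeight c (ρ a) (ρ b))]
  exact det_eq_zero_of_row_eq_zero a fun j => by simp [hrow j]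

open Classical in
theorem det_pathWeight_minor (c : ℕ → R) {ρ κ : Fin q → ℕ} (hρ : Monotone ρ)
    (hκ : Monotone κ) :
    (of fun a b => pathWeight c (ρ a) (κ b)).det =
      if Interlaces ρ κ then ∏ a, pathWeight c (ρ a) (κ a) else 0 := by
  split_ifs with h
  · exact det_pathWeight_minor_of_interlaces c h
  · simp only [Interlaces, not_and_or, not_forall, not_le, not_lt] at h
    rcases h with ⟨a, ha⟩ | ⟨a, b, hab, hba⟩
    · exact det_minor_eq_zero_of_lt (fun _ _ => pathWeight_of_lt) hρ hκ ha
    · exact det_pathWeight_minor_eq_zero c hρ hκ ⟨a, b, hab, hba⟩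

end PathMinor

section Maya

variable {q : ℕ} {lam mu nu : ℕ → ℕ}

theorem maya_strictMono (h : AntitoneOn lam (Set.Iio q)) : StrictMono (maya lam q) := by
  intro a b hab
  have := h (show q - 1 - b < q by omega) (show q - 1 - a < q by omega)
    (show q - 1 - (b : ℕ) ≤ q - 1 - a by omega)
  simp only [maya, Fin.lt_def] at hab ⊢
  omega

theorem maya_le_maya (h : ∀ i < q, mu i ≤ lam i) (a : Fin q) : maya mu q a ≤ maya lam q a :=
  Nat.add_le_add_right (h _ (by omega)) _

theorem maya_lt (hlam : Antitone lam) {N : ℕ} (hN : lam 0 + q ≤ N) (a : Fin q) :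
    maya lam q a < N := by
  have := hlam (Nat.zero_le (q - 1 - a))
  simp only [maya]
  omega

theorem maya_eq_maya_iff : maya mu q = maya lam q ↔ ∀ i < q, mu i = lam i := by
  refine ⟨fun h i hi => ?_, fun h => funext fun a => ?_⟩
  · have := congrFun h ⟨q - 1 - i, by omega⟩
    simp only [maya, show q - 1 - (q - 1 - i) = i by omega] at this
    omega
  · simp only [maya, h _ (show q - 1 - (a : ℕ) < q by omega)]

def ofMaya (q : ℕ) (g : Fin q → ℕ) (i : ℕ) : ℕ :=
  if h : i < q then g ⟨q - 1 - i, by omega⟩ - (q - 1 - i) else 0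

theorem StrictMono.val_le_apply {g : Fin q → ℕ} (hg : StrictMono g) (a : Fin q) :
    (a : ℕ) ≤ g a := by
  obtain ⟨a, ha⟩ := a
  induction a with
  | zero => exact Nat.zero_le _
  | succ a ih => exact (ih (by omega)).trans_lt (hg (Fin.mk_lt_mk.mpr a.lt_succ_self))

variable {g : Fin q → ℕ}

theorem maya_ofMaya (hg : StrictMono g) : maya (ofMaya q g) q = g := by
  funext a
  have := hg.val_le_apply a
  simp only [maya, ofMaya, dif_pos (show q - 1 - (a : ℕ) < q by omega),
    show q - 1 - (q - 1 - (a : ℕ)) = a by omega, Fin.eta]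
  omega

theorem antitone_ofMaya (hg : StrictMono g) : Antitone (ofMaya q g) := by
  refine antitone_nat_of_succ_le fun i => ?_
  unfold ofMaya
  split_ifs with h1 h2
  · have := hg (show (⟨q - 1 - (i + 1), by omega⟩ : Fin q) < ⟨q - 1 - i, by omega⟩ by
      simp only [Fin.mk_lt_mk]; omega)
    omega
  · omega
  all_goals exact Nat.zero_le _

theorem ofMaya_zero_add_le (hg : StrictMono g) {N : ℕ} (hgN : ∀ a, g a < N) :
    ofMaya q g 0 + q ≤ N := by
  unfold ofMaya
  split_ifs with h
  · have := hgN ⟨q - 1, by omega⟩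
    have := hg.val_le_apply ⟨q - 1, by omega⟩
    simp only [Nat.sub_zero] at *
    omega
  · omega

def IsHorizontalStrip (q : ℕ) (lam nu : ℕ → ℕ) : Prop :=
  (∀ i < q, nu i ≤ lam i) ∧ ∀ i, i + 1 < q → lam (i + 1) ≤ nu i

theorem IsHorizontalStrip.antitoneOn (hlam : Antitone lam) (h : IsHorizontalStrip q lam nu) :
    AntitoneOn nu (Set.Iio q) := by
  intro i _ j hj hij
  rcases hij.eq_or_lt with rfl | hij
  · rfl
  · exact (h.1 j hj).trans <| (hlam hij).trans (h.2 i (by simp at hj; omega))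

theorem interlaces_maya_iff (hnu : AntitoneOn nu (Set.Iio q)) :
    Interlaces (maya nu q) (maya lam q) ↔ IsHorizontalStrip q lam nu := by
  constructor
  · rintro ⟨h1, h2⟩
    refine ⟨fun i hi => ?_, fun i hi => ?_⟩
    · have := h1 ⟨q - 1 - i, by omega⟩
      simp only [maya, show q - 1 - (q - 1 - i) = i by omega] at this
      omega
    · have := h2 ⟨q - 1 - (i + 1), by omega⟩ ⟨q - 1 - i, by omega⟩
        (by simp only [Fin.mk_lt_mk]; omega)
      simp only [maya, show q - 1 - (q - 1 - (i + 1)) = i + 1 by omega,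
        show q - 1 - (q - 1 - i) = i by omega] at this
      omega
  · rintro ⟨h1, h2⟩
    refine ⟨fun a => Nat.add_le_add_right (h1 _ (by omega)) _, fun a b hab => ?_⟩
    simp only [Fin.lt_def] at hab
    have := h2 (q - 2 - a) (by omega)
    have := hnu (show q - 1 - (b : ℕ) < q by omega) (show q - 2 - (a : ℕ) < q by omega)
      (show q - 1 - (b : ℕ) ≤ q - 2 - a by omega)
    simp only [maya, show q - 2 - (a : ℕ) + 1 = q - 1 - a by omega] at *
    omega

end Maya

section Cells

variable {q : ℕ} {lam mu nu : ℕ → ℕ}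

theorem mem_cellsD (hlam : Antitone lam) {p : ℕ × ℕ} :
    p ∈ cellsD q lam mu ↔ p.1 < q ∧ mu p.1 ≤ p.2 ∧ p.2 < lam p.1 := by
  have := hlam (Nat.zero_le p.1)
  simp only [cellsD, mem_filter, mem_product, mem_range]
  omega

theorem prod_cellsD {M : Type*} [CommMonoid M] (hlam : Antitone lam) (F : ℕ × ℕ → M) :
    ∏ p ∈ cellsD q lam mu, F p = ∏ i ∈ range q, ∏ j ∈ Ico (mu i) (lam i), F (i, j) := by
  rw [cellsD, prod_filter, prod_product]
  refine prod_congr rfl fun i _ => ?_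
  rw [← prod_filter]
  congr 1
  ext j
  have := hlam (Nat.zero_le i)
  simp only [mem_filter, mem_range, mem_Ico]
  omega

theorem prod_pathWeight_maya {R : Type*} [CommMonoidWithZero R] (c : ℕ → R)
    (hlam : Antitone lam) (h : ∀ i < q, nu i ≤ lam i) :
    ∏ a, pathWeight c (maya nu q a) (maya lam q a) =
      ∏ p ∈ cellsD q lam nu, c (p.2 + (q - 1 - p.1)) := by
  rw [prod_cellsD hlam, ← prod_range_reflect, ← Fin.prod_univ_eq_prod_range]
  refine prod_congr rfl fun a _ => ?_
  rw [maya, maya, pathWeight, if_pos (Nat.add_le_add_right (h _ (by omega)) _)]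
  simp only [show q - 1 - (q - 1 - (a : ℕ)) = a by omega, prod_Ico_add']

end Cells

section SchurV

variable {R : Type*} [CommRing R] {N q : ℕ} {lam mu nu : ℕ → ℕ}

def strictMonoTuples (q N : ℕ) : Finset (Fin q → ℕ) :=
  (Fintype.piFinset fun _ => range N).filter StrictMono

theorem mem_strictMonoTuples {g : Fin q → ℕ} :
    g ∈ strictMonoTuples q N ↔ (∀ a, g a < N) ∧ StrictMono g := by
  simp [strictMonoTuples]

theorem schurV_mul (U V : Matrix (Fin N) (Fin N) R) (q : ℕ) (lam mu : ℕ → ℕ) :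
    SchurV (U * V) q lam mu =
      ∑ g ∈ strictMonoTuples q N, SchurV U q (ofMaya q g) mu * SchurV V q lam (ofMaya q g) := by
  simp only [SchurV, matExt_mul]
  rw [det_sum_mul_eq_sum_strictMono]
  refine sum_congr rfl fun g hg => ?_
  rw [maya_ofMaya (mem_strictMonoTuples.mp hg).2]

theorem schurV_eq_zero_of_lt {U : Matrix (Fin N) (Fin N) R} (hU : U.IsUpperTriangular)
    (hlam : AntitoneOn lam (Set.Iio q)) (hmu : AntitoneOn mu (Set.Iio q)) {i : ℕ} (hi : i < q)
    (h : lam i < mu i) : SchurV U q lam mu = 0 :=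
  det_minor_eq_zero_of_lt (fun _ _ => matExt_eq_zero_of_lt hU) (maya_strictMono hmu).monotone
    (maya_strictMono hlam).monotone (a := ⟨q - 1 - i, by omega⟩)
    (by simp only [maya, show q - 1 - (q - 1 - i) = i by omega]; omega)

open Classical in
theorem schurV_pathMatrix (c : ℕ → R) (hlam : Antitone lam) (hnu : AntitoneOn nu (Set.Iio q))
    (hlamN : ∀ a, maya lam q a < N) (hnuN : ∀ a, maya nu q a < N) :
    SchurV (pathMatrix N c) q lam nu =
      if IsHorizontalStrip q lam nu then ∏ p ∈ cellsD q lam nu, c (p.2 + (q - 1 - p.1))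
      else 0 := by
  have hentries : (of fun a b => matExt (pathMatrix N c) (maya nu q a) (maya lam q b)) =
      of fun a b => pathWeight c (maya nu q a) (maya lam q b) := by
    ext a b
    exact matExt_pathMatrix c (hnuN a) (hlamN b)
  rw [SchurV, hentries, det_pathWeight_minor c (maya_strictMono hnu).monotone
    (maya_strictMono (hlam.antitoneOn _)).monotone, interlaces_maya_iff hnu]
  split_ifs with h
  · exact prod_pathWeight_maya c hlam h.1
  · rfl

theorem schurV_one (hlam : Antitone lam) (hmu : Antitone mu) (hsub : ∀ i < q, mu i ≤ lam i)
    (hN : lam 0 + q ≤ N) :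
    SchurV (1 : Matrix (Fin N) (Fin N) R) q lam mu = if cellsD q lam mu = ∅ then 1 else 0 := by
  have hlamN := maya_lt hlam hN
  rw [← pathMatrix_zero, schurV_pathMatrix 0 hlam (hmu.antitoneOn _) hlamN
    fun a => (maya_le_maya hsub a).trans_lt (hlamN a)]
  by_cases hempty : cellsD q lam mu = ∅
  · have hrows : ∀ i < q, lam i ≤ mu i := fun i hi => not_lt.mp fun hlt =>
      (eq_empty_iff_forall_notMem.mp hempty) (i, mu i) ((mem_cellsD hlam).mpr ⟨hi, le_rfl, hlt⟩)
    rw [if_pos ⟨hsub, fun i hi => (hrows _ hi).trans (hmu i.le_succ)⟩, hempty, prod_empty,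
      if_pos rfl]
  · obtain ⟨p, hp⟩ := nonempty_iff_ne_empty.mpr hempty
    rw [if_neg hempty]
    split_ifs
    exacts [prod_eq_zero hp rfl, rfl]

end SchurV

section InnerShape

variable {M q : ℕ} {lam mu : ℕ → ℕ}

/-- The first column of row `i` holding the largest entry `M`, or `lam i` if there is none;
the entries `< M` of `T` form a tableau of shape `innerShape T / mu`. -/
noncomputable def innerShape (T : cellsD q lam mu → Fin (M + 1)) (i : ℕ) : ℕ :=
  sInf (insert (lam i) {j | ∃ h : (i, j) ∈ cellsD q lam mu, T ⟨(i, j), h⟩ = Fin.last M})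

variable {T : cellsD q lam mu → Fin (M + 1)}

theorem innerShape_le (i : ℕ) : innerShape T i ≤ lam i :=
  Nat.sInf_le (Set.mem_insert _ _)

theorem le_innerShape (hlam : Antitone lam) {i : ℕ} (hsub : mu i ≤ lam i) :
    mu i ≤ innerShape T i := by
  refine le_csInf (Set.insert_nonempty _ _) ?_
  rintro j (rfl | ⟨hj, -⟩)
  exacts [hsub, ((mem_cellsD hlam).mp hj).2.1]

theorem innerShape_le_iff (hlam : Antitone lam) (hT : IsSSYT T) (c : cellsD q lam mu) :
    innerShape T c.1.1 ≤ c.1.2 ↔ T c = Fin.last M := by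
  obtain ⟨⟨i, j⟩, hc⟩ := c
  refine ⟨fun h => ?_, fun h => Nat.sInf_le (Set.mem_insert_of_mem _ ⟨hc, h⟩)⟩
  obtain hmin | ⟨hj₀, hlast⟩ := Nat.sInf_mem (Set.insert_nonempty (lam i)
    {j | ∃ h : (i, j) ∈ cellsD q lam mu, T ⟨(i, j), h⟩ = Fin.last M})
  · have hj : j < lam i := ((mem_cellsD hlam).mp hc).2.2
    have hmin : innerShape T i = lam i := hmin
    simp only at h
    omega
  · exact Fin.last_le_iff.mp (hlast ▸ hT.1 _ ⟨(i, j), hc⟩ rfl h)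

theorem lam_succ_le_innerShape (hlam : Antitone lam) (hmu : Antitone mu)
    (hsub : ∀ i < q, mu i ≤ lam i) (hT : IsSSYT T) {i : ℕ} (hi : i + 1 < q) :
    lam (i + 1) ≤ innerShape T i := by
  by_contra! hlt
  have hmu_le := le_innerShape (T := T) hlam (hsub i (by omega))
  have hlam_le := hlam (Nat.le_add_right i 1)
  have hmu_succ := hmu (Nat.le_add_right i 1)
  have hc : (i, innerShape T i) ∈ cellsD q lam mu :=
    (mem_cellsD hlam).mpr ⟨by omega, hmu_le, by simp only; omega⟩
  have hc' : (i + 1, innerShape T i) ∈ cellsD q lam mu :=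
    (mem_cellsD hlam).mpr ⟨hi, by simp only; omega, hlt⟩
  have hlast := (innerShape_le_iff hlam hT ⟨_, hc⟩).mp le_rfl
  exact (hlast ▸ hT.2 ⟨_, hc⟩ ⟨_, hc'⟩ i.lt_succ_self rfl).not_ge (Fin.le_last _)

theorem isHorizontalStrip_innerShape (hlam : Antitone lam) (hmu : Antitone mu)
    (hsub : ∀ i < q, mu i ≤ lam i) (hT : IsSSYT T) : IsHorizontalStrip q lam (innerShape T) :=
  ⟨fun i _ => innerShape_le i, fun _ => lam_succ_le_innerShape hlam hmu hsub hT⟩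

theorem innerShape_eq {i n : ℕ} (hlam : Antitone lam) (hi : i < q) (hmu : mu i ≤ n)
    (hn : n ≤ lam i)
    (hT : ∀ j (hj : (i, j) ∈ cellsD q lam mu), T ⟨(i, j), hj⟩ = Fin.last M ↔ n ≤ j) :
    innerShape T i = n := by
  refine le_antisymm ?_ (le_csInf (Set.insert_nonempty _ _) ?_)
  · rcases hn.eq_or_lt with rfl | hlt
    · exact innerShape_le i
    · have hc : (i, n) ∈ cellsD q lam mu := (mem_cellsD hlam).mpr ⟨hi, hmu, hlt⟩
      exact Nat.sInf_le (Set.mem_insert_of_mem _ ⟨hc, (hT n hc).mpr le_rfl⟩)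
  · rintro j (rfl | ⟨hj, hlast⟩)
    exacts [hn, (hT j hj).mp hlast]

end InnerShape

section Extension

variable {M q : ℕ} {lam mu nu : ℕ → ℕ}

def extendTableau (T : cellsD q nu mu → Fin M) (c : cellsD q lam mu) : Fin (M + 1) :=
  if h : c.1 ∈ cellsD q nu mu then (T ⟨c.1, h⟩).castSucc else Fin.last M

theorem cellsD_subset (hlam : Antitone lam) (hnu : Antitone nu) (h : ∀ i < q, nu i ≤ lam i) :
    cellsD q nu mu ⊆ cellsD q lam mu := by
  intro p hp
  rw [mem_cellsD hnu] at hp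
  have := h _ hp.1
  exact (mem_cellsD hlam).mpr ⟨hp.1, hp.2.1, by omega⟩

theorem mem_cellsD_iff_lt (hlam : Antitone lam) (hnu : Antitone nu) {p : ℕ × ℕ}
    (hp : p ∈ cellsD q lam mu) :
    p ∈ cellsD q nu mu ↔ p.2 < nu p.1 := by
  rw [mem_cellsD hnu]
  have := (mem_cellsD hlam).mp hp
  tauto

theorem extendTableau_eq_last_iff (hlam : Antitone lam) (hnu : Antitone nu)
    (T : cellsD q nu mu → Fin M) (c : cellsD q lam mu) :
    extendTableau T c = Fin.last M ↔ nu c.1.1 ≤ c.1.2 := by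
  have := mem_cellsD_iff_lt hlam hnu c.2
  unfold extendTableau
  split_ifs with h
  · simp only [(Fin.castSucc_lt_last _).ne, false_iff, not_le]
    exact this.mp h
  · simp only [true_iff, ← not_lt]
    exact fun h' => h (this.mpr h')

theorem isSSYT_extendTableau (hlam : Antitone lam) (hnu : Antitone nu)
    (hstrip : IsHorizontalStrip q lam nu) {T : cellsD q nu mu → Fin M}
    (hT : IsSSYT T) : IsSSYT (extendTableau (lam := lam) T) := by
  constructor
  · intro c d hrow hcol
    have hc := mem_cellsD_iff_lt hlam hnu c.2
    have hd := mem_cellsD_iff_lt hlam hnu d.2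
    unfold extendTableau
    split_ifs with h₁ h₂ h₂
    · exact Fin.castSucc_le_castSucc_iff.mpr (hT.1 _ _ hrow hcol)
    · exact Fin.le_last _
    · have := hc.not.mp h₁
      have := hd.mp h₂
      rw [hrow] at *
      omega
    · exact le_rfl
  · intro c d hrow hcol
    have hd := (mem_cellsD hlam).mp d.2
    have h₁ : c.1 ∈ cellsD q nu mu := by
      rw [mem_cellsD_iff_lt hlam hnu c.2, hcol]
      exact hd.2.2.trans_le <| (hlam (show c.1.1 + 1 ≤ d.1.1 by omega)).trans
        (hstrip.2 _ (by omega))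
    unfold extendTableau
    rw [dif_pos h₁]
    split_ifs with h₂
    · exact Fin.castSucc_lt_castSucc_iff.mpr (hT.2 _ _ hrow hcol)
    · exact Fin.castSucc_lt_last _

theorem innerShape_extendTableau (hlam : Antitone lam) (hnu : Antitone nu)
    (hmu : ∀ i < q, mu i ≤ nu i) (hstrip : IsHorizontalStrip q lam nu)
    (T : cellsD q nu mu → Fin M) {i : ℕ} (hi : i < q) :
    innerShape (extendTableau (lam := lam) T) i = nu i :=
  innerShape_eq hlam hi (hmu i hi) (hstrip.1 i hi) fun _ hj =>
    extendTableau_eq_last_iff hlam hnu T ⟨_, hj⟩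

theorem extendTableau_injective (hlam : Antitone lam) (hnu : Antitone nu)
    (h : ∀ i < q, nu i ≤ lam i) :
    Function.Injective (extendTableau (M := M) (q := q) (lam := lam) (mu := mu) (nu := nu)) := by
  intro T T' hTT'
  funext c
  have := congrFun hTT' ⟨c.1, cellsD_subset hlam hnu h c.2⟩
  simp only [extendTableau, c.2, dif_pos] at this
  exact Fin.castSucc_injective _ this

theorem exists_extendTableau_eq (hlam : Antitone lam) (hnu : Antitone nu)
    (h : ∀ i < q, nu i ≤ lam i) {T : cellsD q lam mu → Fin (M + 1)}
    (hT : IsSSYT T) (hshape : ∀ i < q, innerShape T i = nu i) :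
    ∃ T' : cellsD q nu mu → Fin M, IsSSYT T' ∧ extendTableau T' = T := by
  have hsub := cellsD_subset hlam hnu (mu := mu) h
  have hne : ∀ c : cellsD q nu mu, T ⟨c.1, hsub c.2⟩ ≠ Fin.last M := fun c hlast => by
    have hle := (innerShape_le_iff hlam hT _).mpr hlast
    have hc := (mem_cellsD hnu).mp c.2
    dsimp only at hle
    rw [hshape _ hc.1] at hle
    omega
  refine ⟨fun c => (T _).castPred (hne c), ⟨fun c d hrow hcol => ?_, fun c d hrow hcol => ?_⟩,
    funext fun c => ?_⟩
  · exact Fin.castPred_le_castPred_iff.mpr (hT.1 _ _ hrow hcol)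
  · exact Fin.castPred_lt_castPred_iff.mpr (hT.2 _ _ hrow hcol)
  · unfold extendTableau
    split_ifs with hc
    · exact Fin.castSucc_castPred _ _
    · refine ((innerShape_le_iff hlam hT c).mp ?_).symm
      rw [hshape _ ((mem_cellsD hlam).mp c.2).1]
      exact not_lt.mp ((mem_cellsD_iff_lt hlam hnu c.2).not.mp hc)

theorem prod_extendTableau {R : Type*} [CommMonoid R] (hlam : Antitone lam) (hnu : Antitone nu)
    (hmu : ∀ i < q, mu i ≤ nu i) (h : ∀ i < q, nu i ≤ lam i) (f : ℕ → ℕ × ℕ → R)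
    (T : cellsD q nu mu → Fin M) :
    ∏ c : cellsD q lam mu, f ((extendTableau T c : ℕ) + 1) c.1 =
      (∏ c : cellsD q nu mu, f ((T c : ℕ) + 1) c.1) *
        ∏ p ∈ cellsD q lam nu, f (M + 1) p := by
  set G : ℕ × ℕ → R := fun p =>
    if hp : p ∈ cellsD q nu mu then f ((T ⟨p, hp⟩ : ℕ) + 1) p else f (M + 1) p
  have hG : ∀ c : cellsD q lam mu, f ((extendTableau T c : ℕ) + 1) c.1 = G c.1 := fun c => by
    unfold extendTableau G
    split_ifs <;> simp
  have hstrip : (cellsD q lam mu).filter (· ∉ cellsD q nu mu) = cellsD q lam nu := by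
    ext p
    simp only [mem_filter, mem_cellsD hlam, mem_cellsD hnu]
    have := hmu p.1
    omega
  rw [prod_congr rfl fun c _ => hG c, prod_coe_sort (cellsD q lam mu) G,
    ← prod_filter_mul_prod_filter_not (cellsD q lam mu) (· ∈ cellsD q nu mu), hstrip,
    filter_mem_eq_inter, inter_eq_right.mpr (cellsD_subset hlam hnu h), ← prod_coe_sort]
  congr 1
  · exact prod_congr rfl fun c _ => by simp [G, c.2]
  · refine prod_congr rfl fun p hp => dif_neg ?_
    simp only [mem_cellsD hlam, mem_cellsD hnu] at hp ⊢
    omega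

end Extension

section Branching

variable {R : Type*} [CommRing R] {M N q : ℕ} {lam mu nu : ℕ → ℕ}

theorem tabSum_zero (f : ℕ → ℕ × ℕ → R) :
    tabSum 0 q lam mu f = if cellsD q lam mu = ∅ then 1 else 0 := by
  split_ifs with hempty
  · have : IsEmpty (cellsD q lam mu) := isEmpty_coe_sort.mpr hempty
    simp [tabSum, IsSSYT, Finset.univ_unique]
  · obtain ⟨p, hp⟩ := nonempty_iff_ne_empty.mpr hempty
    have : IsEmpty (cellsD q lam mu → Fin 0) := ⟨fun T => (T ⟨p, hp⟩).elim0⟩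
    simp [tabSum]

theorem tabSum_congr {f f' : ℕ → ℕ × ℕ → R}
    (h : ∀ k, ∀ p ∈ cellsD q lam mu, f k p = f' k p) :
    tabSum M q lam mu f = tabSum M q lam mu f' :=
  sum_congr rfl fun _ _ => prod_congr rfl fun c _ => h _ _ c.2

open Classical in
theorem sum_tableaux_innerShape_eq (hlam : Antitone lam) (hnu : Antitone nu)
    (hmu : ∀ i < q, mu i ≤ nu i) (hstrip : IsHorizontalStrip q lam nu)
    (f : ℕ → ℕ × ℕ → R) :
    ∑ T ∈ (univ.filter fun T : cellsD q lam mu → Fin (M + 1) => IsSSYT T).filter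
        (fun T => ∀ i < q, innerShape T i = nu i),
      ∏ c : cellsD q lam mu, f ((T c : ℕ) + 1) c.1 =
      tabSum M q nu mu f * ∏ p ∈ cellsD q lam nu, f (M + 1) p := by
  rw [tabSum, sum_mul]
  refine (sum_nbij extendTableau (fun T hT => ?_) (extendTableau_injective hlam hnu hstrip.1).injOn
    (fun T hT => ?_) fun T _ => (prod_extendTableau hlam hnu hmu hstrip.1 f T).symm).symm
  · simp only [mem_filter, mem_univ, true_and] at hT ⊢
    exact ⟨isSSYT_extendTableau hlam hnu hstrip hT,
      fun i hi => innerShape_extendTableau hlam hnu hmu hstrip T hi⟩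
  · simp only [mem_coe, mem_filter, mem_univ, true_and] at hT
    obtain ⟨T', hT', rfl⟩ := exists_extendTableau_eq hlam hnu hstrip.1 hT.1 hT.2
    exact ⟨T', by simpa using hT', rfl⟩

open Classical in
theorem tabSum_succ (hlam : Antitone lam) (hmu : Antitone mu) (hsub : ∀ i < q, mu i ≤ lam i)
    (hN : lam 0 + q ≤ N) (f : ℕ → ℕ × ℕ → R) :
    tabSum (M + 1) q lam mu f =
      ∑ g ∈ strictMonoTuples q N,
        if (∀ i < q, mu i ≤ ofMaya q g i) ∧ IsHorizontalStrip q lam (ofMaya q g) then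
          tabSum M q (ofMaya q g) mu f * ∏ p ∈ cellsD q lam (ofMaya q g), f (M + 1) p
        else 0 := by
  have hmaps : ∀ T ∈ univ.filter fun T : cellsD q lam mu → Fin (M + 1) => IsSSYT T,
      maya (innerShape T) q ∈ strictMonoTuples q N := fun T hT => by
    have hT : IsSSYT T := (mem_filter.mp hT).2
    exact mem_strictMonoTuples.mpr
      ⟨fun a => (maya_le_maya (fun i _ => innerShape_le i) a).trans_lt (maya_lt hlam hN a),
        maya_strictMono ((isHorizontalStrip_innerShape hlam hmu hsub hT).antitoneOn hlam)⟩
  rw [tabSum, ← sum_fiberwise_of_maps_to hmaps]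
  refine sum_congr rfl fun g hg => ?_
  obtain ⟨-, hg⟩ := mem_strictMonoTuples.mp hg
  have hfiber : ∀ T : cellsD q lam mu → Fin (M + 1),
      maya (innerShape T) q = g ↔ ∀ i < q, innerShape T i = ofMaya q g i := fun T => by
    conv_lhs => rw [← maya_ofMaya hg]
    exact maya_eq_maya_iff
  rw [filter_congr fun T _ => hfiber T]
  split_ifs with hcond
  · exact sum_tableaux_innerShape_eq hlam (antitone_ofMaya hg) hcond.1 hcond.2 f
  · refine sum_eq_zero fun T hT => absurd ?_ hcond
    simp only [mem_filter, mem_univ, true_and] at hT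
    obtain ⟨hT, hshape⟩ := hT
    have hstrip := isHorizontalStrip_innerShape hlam hmu hsub hT
    exact ⟨fun i hi => hshape i hi ▸ le_innerShape hlam (hsub i hi),
      fun i hi => hshape i hi ▸ hstrip.1 i hi,
      fun i hi => hshape i (by omega) ▸ hstrip.2 i hi⟩

end Branching

theorem schurV_prod_pathMatrix {R : Type*} [CommRing R] {N q : ℕ} (c : ℕ → ℕ → R)
    (M : ℕ) {lam mu : ℕ → ℕ} (hmu : Antitone mu) (hlam : Antitone lam)
    (hsub : ∀ i < q, mu i ≤ lam i) (hN : lam 0 + q ≤ N) :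
    SchurV ((List.range M).map fun k => pathMatrix N (c (k + 1))).prod q lam mu =
      tabSum M q lam mu fun k p => c k (p.2 + (q - 1 - p.1)) := by
  induction M generalizing lam with
  | zero =>
    rw [List.range_zero, List.map_nil, List.prod_nil, schurV_one hlam hmu hsub hN, tabSum_zero]
  | succ M ih =>
    have htri : (((List.range M).map fun k => pathMatrix N (c (k + 1))).prod).IsUpperTriangular :=
      List.prod_induction _ (fun _ _ => BlockTriangular.mul) blockTriangular_one
        (by simp [pathMatrix_isUpperTriangular])
    rw [List.range_succ, List.map_append, List.prod_append, List.map_singleton,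
      List.prod_singleton, schurV_mul, tabSum_succ hlam hmu hsub hN]
    refine sum_congr rfl fun g hg => ?_
    obtain ⟨hgN, hg⟩ := mem_strictMonoTuples.mp hg
    have hnu := antitone_ofMaya hg
    rw [schurV_pathMatrix _ hlam (hnu.antitoneOn _) (maya_lt hlam hN) (by rwa [maya_ofMaya hg])]
    by_cases hstrip : IsHorizontalStrip q lam (ofMaya q g)
    · by_cases hsub' : ∀ i < q, mu i ≤ ofMaya q g i
      · rw [if_pos hstrip, if_pos ⟨hsub', hstrip⟩, ih hnu hsub' (ofMaya_zero_add_le hg hgN)]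
      · obtain ⟨i, hi, hlt⟩ : ∃ i < q, ofMaya q g i < mu i := by simpa using hsub'
        rw [schurV_eq_zero_of_lt htri (hnu.antitoneOn _) (hmu.antitoneOn _) hi hlt, zero_mul,
          if_neg fun h => (h.1 i hi).not_gt hlt]
    · rw [if_neg hstrip, if_neg fun h => hstrip h.2, mul_zero]

theorem tableau_specialization_ninth_variation_general {R : Type*} [CommRing R]
    (M N : ℕ)
    (r m : ℤ) (w : ℕ → ℤ → R)
    (rm : ℕ) (hrm : (rm : ℤ) = r + m) (hrmN : rm ≤ N)
    (lam mu : ℕ → ℕ)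
    (hlam : ∀ i, lam (i + 1) ≤ lam i) (hmu : ∀ i, mu (i + 1) ≤ mu i)
    (hsub : ∀ i, mu i ≤ lam i)
    (hwid : lam 0 ≤ N - rm) :
    SchurV (UmatW N M r w) rm lam mu =
      tabSum M rm lam mu (fun k c => w k (m + (c.2 : ℤ) - (c.1 : ℤ))) := by
  have hU : UmatW N M r w =
      ((List.range M).map fun k => pathMatrix N fun t => w (k + 1) (t + 1 - r)).prod := by
    simp only [UmatW, elemMat_prod_eq_pathMatrix]
  rw [hU, schurV_prod_pathMatrix (fun k t => w k (t + 1 - r)) M (antitone_nat_of_succ_le hmu)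
    (antitone_nat_of_succ_le hlam) (fun i _ => hsub i) (by omega)]
  refine tabSum_congr fun k p hp => congrArg (w k) ?_
  have := ((mem_cellsD (antitone_nat_of_succ_le hlam)).mp hp).1
  push_cast [Nat.cast_sub (show 1 ≤ rm by omega), Nat.cast_sub (show p.1 ≤ rm - 1 by omega)]
  omega

/-- Tableau specialization: `S^{(r+m)}_{λ/μ}(U_1 ⋯ U_M)` is the generating sum over
semistandard tableaux. -/
theorem tableau_specialization_ninth_variation {R : Type*} [CommRing R]
    (M N : ℕ) (hM : 0 < M) (hN : 0 < N)
    (r m : ℤ) (w : ℕ → ℤ → R)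
    (rm : ℕ) (hrm : (rm : ℤ) = r + m) (hrmN : rm ≤ N)
    (lam mu : ℕ → ℕ)
    (hlam : ∀ i, lam (i + 1) ≤ lam i) (hmu : ∀ i, mu (i + 1) ≤ mu i)
    (hsub : ∀ i, mu i ≤ lam i)
    (hlen : ∀ i, rm ≤ i → lam i = 0) (hwid : lam 0 ≤ N - rm) :
    SchurV (UmatW N M r w) rm lam mu =
      tabSum M rm lam mu (fun k c => w k (m + (c.2 : ℤ) - (c.1 : ℤ))) :=
  tableau_specialization_ninth_variation_general M N r m w rm hrm hrmN lam mu hlam hmu hsub hwid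
end

section
/- General rectangle relation (Theorem 4.4): Let R be a commutative ring, N a positive integer, U an N×N upper unitriangular matrix over R, and r an integer. Let p, q ≥ 1 and a, b ≥ 0 satisfy a ≤ q and 2 ≤ a+b ≤ p+1, and assume p+1 ≤ r−1 and q+b ≤ N−r. Then (−1)^{a+b} S^{(r)}_{[p+1|q+b−1]}(U) · S^{(r−1)}_{[p−1|q−a]^{p−a−b+1}}(U) = S^{(r)}_{[p|q+b−1]}(U) · S^{(r−1)}_{[p|q−a+1]}(U) − S^{(r)}_{[p|q−a]}(U) · S^{(r−1)}_{[p|q+b]}(U) + Σ_{t=0}^{a+b−3} (−1)^{t−1} S^{(r)}_{[p|q+b−1]_{q−a+t+1}}(U) · S^{(r−1)}_{[p−1|q−a]^{p−t−1}}(U), where [m|n] := (n^m), [m|n]^l := ((n+1)^l, n^{m−l}), and [m|n]_k := (n^m, k). -/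
open Matrix BigOperators Finset Filter

/-!
The relation is an instance of the incidence Plücker relation between the minors `Δ` on the
first `r` rows and the minors `Δ'` on the first `r - 1` rows of any matrix: for column tuples
`K` of length `r` and `L` of length `r - 1`,
`∑ₖ (-1)ᵏ Δ_{(Kₖ, L)} Δ'_{K ∖ Kₖ} = Δ'_L Δ_K`.
It holds because, by Laplace expansion, `∑ₖ (-1)ᵏ Δ'_{K ∖ Kₖ} · (column Kₖ)` is `±Δ_K` times
the last unit vector, while `Δ_{(x, L)}` is linear in the column `x`.

Apply it with `K = J([p|c]; r)` and `L = J([p|c+e+2]; r-1)`, where `c = q - a` and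
`e = a + b - 2`. The terms with `Kₖ ∈ L` vanish; in the other `e + 2` terms, sorting `(Kₖ, L)`
and `K ∖ Kₖ` gives the Maya diagrams of `[p|c+e+1]` and `[p|c+1]`, and then of
`[p|c+e+1]_{c+t+1}` and `[p-1|c]^{p-t-1}` for `t = 0, …, e`.
-/

theorem neg_one_pow_mul_neg_one_pow_add {R : Type*} [Monoid R] [HasDistribNeg R] (m n : ℕ) :
    (-1 : R) ^ m * (-1) ^ (m + n) = (-1) ^ n := by
  rw [← pow_add, ← add_assoc, pow_add, Even.neg_one_pow ⟨m, rfl⟩, one_mul]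

theorem Fin.val_succAbove {n : ℕ} (k : Fin (n + 1)) (j : Fin n) :
    (k.succAbove j : ℕ) = if (j : ℕ) < k then (j : ℕ) else (j : ℕ) + 1 := by
  unfold Fin.succAbove
  split_ifs <;> simp_all [Fin.lt_def]

namespace Matrix

variable {R : Type*} [CommRing R] {ι : Type*} {n : ℕ}

theorem sum_neg_one_pow_mul_det_smul_col_eq_single (A : Matrix (Fin (n + 1)) ι R)
    (K : Fin (n + 1) → ι) :
    ∑ k : Fin (n + 1), ((-1) ^ (k : ℕ) * (A.submatrix Fin.castSucc (K ∘ k.succAbove)).det) •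
        (fun i => A i (K k)) =
      Pi.single (Fin.last n) ((-1) ^ n * (A.submatrix id K).det) := by
  ext i
  set B := A.submatrix (Function.update id (Fin.last n) i) K
  have hB : (-1) ^ n * B.det =
      ∑ k : Fin (n + 1), (-1) ^ (k : ℕ) * (A.submatrix Fin.castSucc (K ∘ k.succAbove)).det *
        A i (K k) := by
    rw [det_succ_row B (Fin.last n), Finset.mul_sum]
    refine Finset.sum_congr rfl fun k _ => ?_
    have hrows : Function.update id (Fin.last n) i ∘ (Fin.last n).succAbove = Fin.castSucc := by
      funext j; simp [Fin.castSucc_ne_last]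
    simp only [B, submatrix_submatrix, hrows, submatrix_apply, Function.update_self,
      Fin.val_last]
    linear_combination (A i (K k) * (A.submatrix Fin.castSucc (K ∘ k.succAbove)).det) *
      neg_one_pow_mul_neg_one_pow_add (R := R) n k
  simp only [Finset.sum_apply, Pi.smul_apply, smul_eq_mul, ← hB]
  induction i using Fin.lastCases with
  | last =>
    have hid : Function.update id (Fin.last n) (Fin.last n) = id :=
      Function.update_eq_self (Fin.last n) id
    simp [B, hid]
  | cast i =>
    rw [Pi.single_eq_of_ne (Fin.castSucc_ne_last i)]
    have : B.det = 0 := det_zero_of_row_eq (Fin.castSucc_ne_last i)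
      (funext fun k => by simp [B, Fin.castSucc_ne_last])
    rw [this, mul_zero]

theorem sum_det_submatrix_cons_mul_det_submatrix_succAbove (A : Matrix (Fin (n + 1)) ι R)
    (K : Fin (n + 1) → ι) (L : Fin n → ι) :
    ∑ k : Fin (n + 1), (-1) ^ (k : ℕ) * (A.submatrix id (Fin.cons (K k) L)).det *
        (A.submatrix Fin.castSucc (K ∘ k.succAbove)).det =
      (A.submatrix Fin.castSucc L).det * (A.submatrix id K).det := by
  set W := A.submatrix id (Fin.cons (K 0) L)
  have hcol : ∀ k, A.submatrix id (Fin.cons (K k) L) = W.updateCol 0 (fun i => A i (K k)) := by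
    intro k; ext i j
    cases j using Fin.cases <;> simp [W]
  have hlast : ∀ c : R, (W.updateCol 0 (Pi.single (Fin.last n) c)).det =
      (-1) ^ n * c * (A.submatrix Fin.castSucc L).det := by
    intro c
    rw [det_succ_column_zero, Fintype.sum_eq_single (Fin.last n)]
    · have : (W.updateCol 0 (Pi.single (Fin.last n) c)).submatrix Fin.castSucc Fin.succ
          = A.submatrix Fin.castSucc L := by
        ext i j; simp [W]
      simp [this]
    · intro i hi; simp [hi]
  calc ∑ k : Fin (n + 1), (-1) ^ (k : ℕ) * (A.submatrix id (Fin.cons (K k) L)).det *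
        (A.submatrix Fin.castSucc (K ∘ k.succAbove)).det
      = cramer W (∑ k : Fin (n + 1), ((-1) ^ (k : ℕ) *
          (A.submatrix Fin.castSucc (K ∘ k.succAbove)).det) • fun i => A i (K k)) 0 := by
        rw [map_sum, Finset.sum_apply]
        refine Finset.sum_congr rfl fun k _ => ?_
        rw [map_smul, Pi.smul_apply, smul_eq_mul, cramer_apply, hcol]
        ring
    _ = (A.submatrix Fin.castSucc L).det * (A.submatrix id K).det := by
        rw [sum_neg_one_pow_mul_det_smul_col_eq_single, cramer_apply, hlast, ← mul_assoc,
          ← pow_add, Even.neg_one_pow ⟨n, rfl⟩, one_mul, mul_comm]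

theorem det_submatrix_cons_eq_zero (A : Matrix (Fin (n + 1)) ι R) (x : ι) (L : Fin n → ι)
    (j : Fin n) (hx : x = L j) : (A.submatrix id (Fin.cons x L)).det = 0 :=
  det_zero_of_column_eq (Fin.succ_ne_zero j).symm fun i => by simp [hx]

theorem det_submatrix_cons_eq_neg_one_pow_mul (A : Matrix (Fin (n + 1)) ι R) (x : ι)
    (L : Fin n → ι) (m : Fin (n + 1)) :
    (A.submatrix id (Fin.cons x L)).det =
      (-1) ^ (m : ℕ) * (A.submatrix id (m.insertNth x L)).det := by
  have hperm : A.submatrix id (Fin.cons x L ∘ m.cycleRange) =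
      (A.submatrix id (Fin.cons x L)).submatrix id m.cycleRange := rfl
  rw [← Fin.cons_comp_cycleRange, hperm, det_permute', Fin.sign_cycleRange, ← mul_assoc]
  push_cast
  rw [← pow_add, Even.neg_one_pow ⟨m, rfl⟩, one_mul]

end Matrix

def matExtRows {R : Type*} [Zero R] {N : ℕ} (U : Matrix (Fin N) (Fin N) R) (r : ℕ) :
    Matrix (Fin r) ℕ R :=
  Matrix.of fun i j => matExt U i j

section SchurV

variable {R : Type*} [CommRing R] {N : ℕ} (U : Matrix (Fin N) (Fin N) R)

theorem schurV_zero_eq_det_submatrix (r : ℕ) (lam : ℕ → ℕ) :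
    SchurV U r lam (fun _ => 0) = ((matExtRows U r).submatrix id (maya lam r)).det := by
  simp only [SchurV, matExtRows, maya, zero_add]
  rfl

theorem schurV_zero_eq_det_submatrix_castSucc (r : ℕ) (lam : ℕ → ℕ) :
    SchurV U r lam (fun _ => 0) =
      ((matExtRows U (r + 1)).submatrix Fin.castSucc (maya lam r)).det :=
  schurV_zero_eq_det_submatrix U r lam

end SchurV

section Rectangle

variable {R : Type*} [CommRing R] {N : ℕ} (U : Matrix (Fin N) (Fin N) R) (c e p s : ℕ)

def rectPluckerTerm (k : Fin (s + 1)) : R :=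
  (-1) ^ (k : ℕ) *
    ((matExtRows U (s + 1)).submatrix id
      (Fin.cons (maya (rectP p c) (s + 1) k) (maya (rectP p (c + e + 2)) s))).det *
    ((matExtRows U (s + 1)).submatrix Fin.castSucc (maya (rectP p c) (s + 1) ∘ k.succAbove)).det

theorem sum_rectPluckerTerm :
    ∑ k, rectPluckerTerm U c e p s k =
      SchurV U s (rectP p (c + e + 2)) (fun _ => 0) *
        SchurV U (s + 1) (rectP p c) (fun _ => 0) := by
  rw [schurV_zero_eq_det_submatrix_castSucc, schurV_zero_eq_det_submatrix]
  exact Matrix.sum_det_submatrix_cons_mul_det_submatrix_succAbove _ _ _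

theorem rectPluckerTerm_eq_zero_of_lt (k : Fin (s + 1)) (hk : (k : ℕ) < s - p) :
    rectPluckerTerm U c e p s k = 0 := by
  rw [rectPluckerTerm, Matrix.det_submatrix_cons_eq_zero _ _ _ ⟨k, by omega⟩, mul_zero,
    zero_mul]
  simp only [maya, rectP]
  split_ifs <;> omega

theorem rectPluckerTerm_eq_zero_of_gt (k : Fin (s + 1)) (hk : s - p + e + 2 ≤ k) :
    rectPluckerTerm U c e p s k = 0 := by
  rw [rectPluckerTerm,
    Matrix.det_submatrix_cons_eq_zero _ _ _ ⟨k - (e + 2), by omega⟩, mul_zero, zero_mul]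
  simp only [maya, rectP]
  split_ifs <;> omega

theorem rectPluckerTerm_of_val_eq_sub (hps : p ≤ s) (k : Fin (s + 1)) (hk : (k : ℕ) = s - p) :
    rectPluckerTerm U c e p s k =
      SchurV U (s + 1) (rectP p (c + e + 1)) (fun _ => 0) *
        SchurV U s (rectP p (c + 1)) (fun _ => 0) := by
  have hcols : (⟨s - p, by omega⟩ : Fin (s + 1)).insertNth (maya (rectP p c) (s + 1) k)
      (maya (rectP p (c + e + 2)) s) = maya (rectP p (c + e + 1)) (s + 1) := by
    refine Fin.insertNth_eq_iff.2 ⟨?_, funext fun j => ?_⟩ <;>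
      simp only [Fin.removeNth, maya, rectP, Fin.val_succAbove, hk] <;>
      split_ifs <;> omega
  have hcols' : maya (rectP p c) (s + 1) ∘ k.succAbove = maya (rectP p (c + 1)) s := by
    funext j
    simp only [Function.comp, maya, rectP, Fin.val_succAbove, hk]
    split_ifs <;> omega
  rw [rectPluckerTerm, Matrix.det_submatrix_cons_eq_neg_one_pow_mul _ _ _ ⟨s - p, by omega⟩,
    hcols, hcols', ← schurV_zero_eq_det_submatrix, ← schurV_zero_eq_det_submatrix_castSucc, hk,
    ← mul_assoc, ← pow_add, Even.neg_one_pow ⟨_, rfl⟩, one_mul]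

theorem rectPluckerTerm_of_val_eq_sub_add (hps : p ≤ s) (t : ℕ) (ht : t ≤ e) (k : Fin (s + 1))
    (hk : (k : ℕ) = s - p + (t + 1)) :
    rectPluckerTerm U c e p s k =
      (-1) ^ (t + 1) * (SchurV U (s + 1) (rectLowP p (c + e + 1) (c + t + 1)) (fun _ => 0) *
        SchurV U s (rectUpP (p - 1) c (p - t - 1)) (fun _ => 0)) := by
  have hcols : (⟨s - p, by omega⟩ : Fin (s + 1)).insertNth (maya (rectP p c) (s + 1) k)
      (maya (rectP p (c + e + 2)) s) = maya (rectLowP p (c + e + 1) (c + t + 1)) (s + 1) := by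
    refine Fin.insertNth_eq_iff.2 ⟨?_, funext fun j => ?_⟩ <;>
      simp only [Fin.removeNth, maya, rectP, rectLowP, Fin.val_succAbove, hk] <;>
      split_ifs <;> omega
  have hcols' :
      maya (rectP p c) (s + 1) ∘ k.succAbove = maya (rectUpP (p - 1) c (p - t - 1)) s := by
    funext j
    simp only [Function.comp, maya, rectP, rectUpP, Fin.val_succAbove, hk]
    split_ifs <;> omega
  rw [rectPluckerTerm, Matrix.det_submatrix_cons_eq_neg_one_pow_mul _ _ _ ⟨s - p, by omega⟩,
    hcols, hcols', ← schurV_zero_eq_det_submatrix, ← schurV_zero_eq_det_submatrix_castSucc, hk,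
    ← mul_assoc, mul_comm ((-1 : R) ^ _), ← mul_assoc, Fin.val_mk,
    neg_one_pow_mul_neg_one_pow_add, mul_assoc]

theorem rectLowP_self (m n : ℕ) : rectLowP m n n = rectP (m + 1) n := by
  funext i
  simp only [rectLowP, rectP]
  split_ifs <;> omega

theorem schurV_rectangle_relation (hep : e + 1 ≤ p) (hps : p ≤ s) :
    (-1) ^ (e + 2) * (SchurV U (s + 1) (rectP (p + 1) (c + e + 1)) (fun _ => 0) *
        SchurV U s (rectUpP (p - 1) c (p - 1 - e)) (fun _ => 0)) =
      SchurV U (s + 1) (rectP p (c + e + 1)) (fun _ => 0) *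
          SchurV U s (rectP p (c + 1)) (fun _ => 0) -
        SchurV U (s + 1) (rectP p c) (fun _ => 0) *
          SchurV U s (rectP p (c + e + 2)) (fun _ => 0) +
        ∑ t ∈ Finset.range e, (-1) ^ (t + 1) *
          (SchurV U (s + 1) (rectLowP p (c + e + 1) (c + t + 1)) (fun _ => 0) *
            SchurV U s (rectUpP (p - 1) c (p - t - 1)) (fun _ => 0)) := by
  have hsum := sum_rectPluckerTerm U c e p s
  rw [Finset.sum_fin_eq_sum_range] at hsum
  set f : ℕ → R := fun k => if hk : k < s + 1 then rectPluckerTerm U c e p s ⟨k, hk⟩ else 0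
  have hf : ∀ k (hk : k < s + 1), f k = rectPluckerTerm U c e p s ⟨k, hk⟩ :=
    fun k hk => dif_pos hk
  have hlow : ∑ k ∈ Finset.range (s - p), f k = 0 := Finset.sum_eq_zero fun k hk => by
    rw [Finset.mem_range] at hk
    rw [hf k (by omega), rectPluckerTerm_eq_zero_of_lt U c e p s _ hk]
  have hhigh : ∑ k ∈ Finset.range (p - 1 - e), f (s - p + (e + 2) + k) = 0 :=
    Finset.sum_eq_zero fun k hk => by
      rw [Finset.mem_range] at hk
      rw [hf _ (by omega), rectPluckerTerm_eq_zero_of_gt U c e p s _ (by dsimp only; omega)]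
  have hmid : ∑ k ∈ Finset.range (e + 2), f (s - p + k) =
      ∑ t ∈ Finset.range e, f (s - p + (t + 1)) + f (s - p) + f (s - p + (e + 1)) := by
    rw [Finset.sum_range_succ, Finset.sum_range_succ', add_zero]
  have hB : f (s - p) = SchurV U (s + 1) (rectP p (c + e + 1)) (fun _ => 0) *
      SchurV U s (rectP p (c + 1)) (fun _ => 0) := by
    rw [hf _ (by omega), rectPluckerTerm_of_val_eq_sub U c e p s hps _ rfl]
  have hterm : ∀ t ≤ e, f (s - p + (t + 1)) =
      (-1) ^ (t + 1) * (SchurV U (s + 1) (rectLowP p (c + e + 1) (c + t + 1)) (fun _ => 0) *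
        SchurV U s (rectUpP (p - 1) c (p - t - 1)) (fun _ => 0)) := fun t ht => by
    rw [hf _ (by omega), rectPluckerTerm_of_val_eq_sub_add U c e p s hps t ht _ rfl]
  have hrange : Finset.range (s + 1) = Finset.range (s - p + (e + 2) + (p - 1 - e)) := by
    congr 1; omega
  rw [hrange, Finset.sum_range_add, Finset.sum_range_add, hlow, hhigh, hmid,
    Finset.sum_congr rfl fun t ht => hterm t (Finset.mem_range.1 ht).le, hB, hterm e le_rfl,
    rectLowP_self, show p - e - 1 = p - 1 - e by omega] at hsum
  linear_combination -hsum

end Rectangle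

theorem rectangle_relation_general_general {R : Type*} [CommRing R] {N : ℕ}
    (U : Matrix (Fin N) (Fin N) R)
    (p q a b r : ℕ)
    (ha : a ≤ q) (hab2 : 2 ≤ a + b) (habp : a + b ≤ p + 1)
    (hr : p + 1 ≤ r - 1) :
    (-1 : R) ^ (a + b) *
        (SchurV U r (rectP (p + 1) (q + b - 1)) (fun _ => 0) *
          SchurV U (r - 1) (rectUpP (p - 1) (q - a) (p + 1 - (a + b))) (fun _ => 0)) =
      SchurV U r (rectP p (q + b - 1)) (fun _ => 0) *
          SchurV U (r - 1) (rectP p (q - a + 1)) (fun _ => 0) -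
        SchurV U r (rectP p (q - a)) (fun _ => 0) *
          SchurV U (r - 1) (rectP p (q + b)) (fun _ => 0) +
        ∑ t ∈ Finset.range (a + b - 2),
          (-1 : R) ^ (t + 1) *
            (SchurV U r (rectLowP p (q + b - 1) (q - a + t + 1)) (fun _ => 0) *
              SchurV U (r - 1) (rectUpP (p - 1) (q - a) (p - t - 1)) (fun _ => 0)) := by
  obtain ⟨s, rfl⟩ : ∃ s, r = s + 1 := ⟨r - 1, by omega⟩
  have H := schurV_rectangle_relation U (q - a) (a + b - 2) p s (by omega) (by omega)
  rw [Nat.add_sub_cancel]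
  rwa [show a + b - 2 + 2 = a + b by omega,
    show q - a + (a + b - 2) + 1 = q + b - 1 by omega,
    show q - a + (a + b - 2) + 2 = q + b by omega,
    show p - 1 - (a + b - 2) = p + 1 - (a + b) by omega] at H

/-- General rectangle relation (Theorem 4.4). -/
theorem rectangle_relation_general {R : Type*} [CommRing R] {N : ℕ} (hN : 0 < N)
    (U : Matrix (Fin N) (Fin N) R) (hU : UpperUni U)
    (p q a b r : ℕ) (hp : 1 ≤ p) (hq : 1 ≤ q)
    (ha : a ≤ q) (hab2 : 2 ≤ a + b) (habp : a + b ≤ p + 1)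
    (hr : p + 1 ≤ r - 1) (hrN : r ≤ N) (hwid : q + b ≤ N - r) :
    (-1 : R) ^ (a + b) *
        (SchurV U r (rectP (p + 1) (q + b - 1)) (fun _ => 0) *
          SchurV U (r - 1) (rectUpP (p - 1) (q - a) (p + 1 - (a + b))) (fun _ => 0)) =
      SchurV U r (rectP p (q + b - 1)) (fun _ => 0) *
          SchurV U (r - 1) (rectP p (q - a + 1)) (fun _ => 0) -
        SchurV U r (rectP p (q - a)) (fun _ => 0) *
          SchurV U (r - 1) (rectP p (q + b)) (fun _ => 0) +
        ∑ t ∈ Finset.range (a + b - 2),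
          (-1 : R) ^ (t + 1) *
            (SchurV U r (rectLowP p (q + b - 1) (q - a + t + 1)) (fun _ => 0) *
              SchurV U (r - 1) (rectUpP (p - 1) (q - a) (p - t - 1)) (fun _ => 0)) :=
  rectangle_relation_general_general U p q a b r ha hab2 habp hr
end
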